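/- If M is a representable matroid and X' is any subset of its ground set, then csd(M[X']) ≤ csd(M): contraction*-depth is monotone under restriction. -/

import Mathlib

/-!
A represented matroid is given by its family of column vectors
`w : ι → (Fin m → F)`.  Independence is considered relative to a subspace `K`
of contracted vectors, and relative to a ground subset `S ⊆ ι`
(the restriction `M[S]`), following the definition of `csd(A, {v₁,…,vₖ})`.
-/

/-- `D` is a dependent subset of the ground set `S` in the matroid of the
columns `w` contracted by the subspace `K`: some nontrivial linear combination
of the columns in `D` lies in `K`. -/
def depOn {F : Type*} [Field F] {ι : Type*} [Fintype ι] {m : ℕ}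
    (w : ι → Fin m → F) (K : Submodule F (Fin m → F)) (S D : Set ι) : Prop :=
  D ⊆ S ∧ ∃ c : ι → F, (∀ i ∉ D, c i = 0) ∧ c ≠ 0 ∧ (∑ i, c i • w i) ∈ K

/-- A circuit: a minimal dependent set. -/
def circuitOn {F : Type*} [Field F] {ι : Type*} [Fintype ι] {m : ℕ}
    (w : ι → Fin m → F) (K : Submodule F (Fin m → F)) (S C : Set ι) : Prop :=
  depOn w K S C ∧ ∀ D ⊂ C, ¬ depOn w K S D

/-- Two elements of `S` lie in a common circuit (or are equal). -/
def relOn {F : Type*} [Field F] {ι : Type*} [Fintype ι] {m : ℕ}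
    (w : ι → Fin m → F) (K : Submodule F (Fin m → F)) (S : Set ι)
    (e f : ι) : Prop :=
  e = f ∨ ∃ C, circuitOn w K S C ∧ e ∈ C ∧ f ∈ C

/-- The matroid restricted to `S` (contracted by `K`) is connected. -/
def connOn {F : Type*} [Field F] {ι : Type*} [Fintype ι] {m : ℕ}
    (w : ι → Fin m → F) (K : Submodule F (Fin m → F)) (S : Set ι) : Prop :=
  ∀ e ∈ S, ∀ f ∈ S, relOn w K S e f

/-- `CsdLE w S K d`: the contraction*-depth of the matroid of the columns
`w i`, `i ∈ S`, contracted by `K`, is at most `d`.  (Rank `0` gives `0`;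
a disconnected matroid gives the maximum over connected components;
a connected matroid gives `1` plus the minimum over contractions by a single
arbitrary vector `v` of the ambient space.) -/
inductive CsdLE {F : Type*} [Field F] {ι : Type*} [Fintype ι] {m : ℕ}
    (w : ι → Fin m → F) : Set ι → Submodule F (Fin m → F) → ℕ → Prop
  | rank0 (S K d) : (∀ i ∈ S, w i ∈ K) → CsdLE w S K d
  | comp (S K d) : ¬ connOn w K S →
      (∀ e ∈ S, CsdLE w {f ∈ S | relOn w K S e f} K d) → CsdLE w S K d
  | contr (S K d v) : connOn w K S →
      CsdLE w S (K ⊔ Submodule.span F {v}) d → CsdLE w S K (d + 1)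

/-- `CdLEr w S K d`: the contraction-depth of the matroid of the columns
`w i`, `i ∈ S`, contracted by `K`, is at most `d`.  (A single element gives
`1`; a disconnected matroid gives the maximum over connected components; a
connected matroid gives `1` plus the minimum over contractions of a single
element of the matroid.) -/
inductive CdLEr {F : Type*} [Field F] {ι : Type*} [Fintype ι] {m : ℕ}
    (w : ι → Fin m → F) : Set ι → Submodule F (Fin m → F) → ℕ → Prop
  | empty (S K d) : S = ∅ → CdLEr w S K d
  | single (S K d e) : S = {e} → CdLEr w S K (d + 1)
  | comp (S K d) : ¬ connOn w K S →
      (∀ e ∈ S, CdLEr w {f ∈ S | relOn w K S e f} K d) → CdLEr w S K d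
  | contr (S K d e) : connOn w K S → e ∈ S →
      CdLEr w (S \ {e}) (K ⊔ Submodule.span F {w e}) d → CdLEr w S K (d + 1)

/-- The contraction*-depth of `M(A)[S]/K`. -/
noncomputable def csdR {F : Type*} [Field F] {ι : Type*} [Fintype ι] {m : ℕ}
    (w : ι → Fin m → F) (S : Set ι) (K : Submodule F (Fin m → F)) : ℕ :=
  sInf {d | CsdLE w S K d}

/-- The contraction-depth of `M(A)[S]/K`. -/
noncomputable def cdR {F : Type*} [Field F] {ι : Type*} [Fintype ι] {m : ℕ}
    (w : ι → Fin m → F) (S : Set ι) (K : Submodule F (Fin m → F)) : ℕ :=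
  sInf {d | CdLEr w S K d}

section Aux

variable {F : Type*} [Field F] {ι : Type*} [Fintype ι] {m : ℕ}
variable {w : ι → Fin m → F} {K : Submodule F (Fin m → F)} {S : Set ι}

/-- The linear combination given by coefficients `c` lies in `K`. -/
def inK (w : ι → Fin m → F) (K : Submodule F (Fin m → F)) (c : ι → F) : Prop :=
  (∑ i, c i • w i) ∈ K

lemma inK_sub_smul {c z : ι → F} (a : F) (hc : inK w K c) (hz : inK w K z) :
    inK w K (c - a • z) := by
  unfold inK at *
  have : (∑ i, (c - a • z) i • w i)
      = (∑ i, c i • w i) - a • (∑ i, z i • w i) := by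
    rw [Finset.smul_sum, ← Finset.sum_sub_distrib]
    refine Finset.sum_congr rfl fun i _ => ?_
    simp [sub_smul, smul_smul]
  rw [this]
  exact K.sub_mem hc (K.smul_mem a hz)

lemma dep_of_vec {c : ι → F} {D : Set ι} (h0 : c ≠ 0) (hK : inK w K c)
    (hsub : Function.support c ⊆ D) (hDS : D ⊆ S) : depOn w K S D :=
  ⟨hDS, c, fun i hi => by_contra fun h => hi (hsub h), h0, hK⟩

lemma circuit_vec {C : Set ι} (h : circuitOn w K S C) :
    ∃ c : ι → F, inK w K c ∧ Function.support c = C := by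
  obtain ⟨⟨hCS, c, hc0, hcne, hcK⟩, hmin⟩ := h
  have hsub : Function.support c ⊆ C := fun i hi => by_contra fun h => hi (hc0 i h)
  rcases hsub.ssubset_or_eq with hss | heq
  · exact absurd (dep_of_vec hcne hcK subset_rfl ((subset_of_ssubset hss).trans hCS)) (hmin _ hss)
  · exact ⟨c, hcK, heq⟩

lemma mem_support_subset {c : ι → F} {D : Set ι} (h : ∀ i ∉ D, c i = 0) :
    Function.support c ⊆ D := fun i hi => by_contra fun hn => hi (h i hn)

/-- Minimal-support circuit: from any `K`-combination with `f` in its support,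
we get a circuit containing `f` inside the support. -/
lemma exists_circuit_of_vec {f : ι} :
    ∀ n : ℕ, ∀ c : ι → F, (Function.support c).ncard ≤ n → inK w K c → c f ≠ 0 →
      Function.support c ⊆ S →
      ∃ C, circuitOn w K S C ∧ f ∈ C ∧ C ⊆ Function.support c := by
  intro n
  induction n with
  | zero =>
    intro c hcard _ hf _
    exact absurd (Set.ncard_eq_zero (Set.toFinite _) |>.mp (Nat.le_zero.mp hcard))
      (Set.nonempty_iff_ne_empty.mp ⟨f, hf⟩)
  | succ n ih =>
    intro c hcard hK hf hS
    by_cases hC : circuitOn w K S (Function.support c)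
    · exact ⟨_, hC, hf, subset_rfl⟩
    have hcne : c ≠ 0 := fun h => hf (by simp [h])
    have hdep : depOn w K S (Function.support c) := dep_of_vec hcne hK subset_rfl hS
    obtain ⟨D, hDss, hDdep⟩ : ∃ D, D ⊂ Function.support c ∧ depOn w K S D := by
      by_contra h
      push_neg at h
      exact hC ⟨hdep, fun D hD => h D hD⟩
    obtain ⟨-, z, hz0, hzne, hzK⟩ := hDdep
    have hzsupp : Function.support z ⊆ D := mem_support_subset hz0
    by_cases hzf : z f ≠ 0
    · have hzc : Function.support z ⊆ Function.support c := hzsupp.trans hDss.subset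
      have hlt : (Function.support z).ncard < (Function.support c).ncard :=
        Set.ncard_lt_ncard (hzsupp.trans_ssubset hDss) (Set.toFinite _)
      obtain ⟨C, h1, h2, h3⟩ := ih z (by omega) hzK hzf (hzc.trans hS)
      exact ⟨C, h1, h2, h3.trans hzc⟩
    push_neg at hzf
    obtain ⟨j, hj⟩ : ∃ j, z j ≠ 0 := Function.ne_iff.mp hzne
    set c' := c - (c j / z j) • z with hc'
    have hc'K : inK w K c' := inK_sub_smul _ hK hzK
    have hc'f : c' f ≠ 0 := by simp [hc', hzf, hf]
    have hc'j : c' j = 0 := by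
      simp [hc', div_mul_cancel₀ _ hj]
    have hjc : j ∈ Function.support c := hDss.subset (hzsupp hj)
    have hsub : Function.support c' ⊆ Function.support c \ {j} := by
      intro i hi
      have hine : i ≠ j := fun h => hi (h ▸ hc'j)
      refine ⟨?_, hine⟩
      by_contra hic
      have hci : c i = 0 := Function.notMem_support.mp hic
      have hzi : z i = 0 := by
        by_contra hzi
        exact hic (hDss.subset (hzsupp hzi))
      apply hi
      simp [hc', hci, hzi]
    have hss : Function.support c' ⊂ Function.support c :=
      hsub.trans_ssubset (Set.sdiff_singleton_ssubset.mpr hjc)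
    have hlt : (Function.support c').ncard < (Function.support c).ncard :=
      Set.ncard_lt_ncard hss (Set.toFinite _)
    obtain ⟨C, h1, h2, h3⟩ := ih c' (by omega) hc'K hc'f (hss.subset.trans hS)
    exact ⟨C, h1, h2, h3.trans hss.subset⟩

end Aux
section Trans

variable {F : Type*} [Field F] {ι : Type*} [Fintype ι] {m : ℕ}
variable {w : ι → Fin m → F} {K : Submodule F (Fin m → F)} {S : Set ι}

/-- Strong circuit elimination for represented matroids. -/
lemma strong_elim {C1 C2 : Set ι} {e f : ι} (h1 : circuitOn w K S C1)
    (h2 : circuitOn w K S C2) (he1 : e ∈ C1) (he2 : e ∈ C2) (hf : f ∈ C1) (hfn : f ∉ C2) :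
    ∃ C3, circuitOn w K S C3 ∧ f ∈ C3 ∧ C3 ⊆ (C1 ∪ C2) \ {e} := by
  obtain ⟨c1, hc1K, hc1s⟩ := circuit_vec h1
  obtain ⟨c2, hc2K, hc2s⟩ := circuit_vec h2
  have hc2e : c2 e ≠ 0 := by rw [← Function.mem_support, hc2s]; exact he2
  set c := c1 - (c1 e / c2 e) • c2 with hc
  have hcK : inK w K c := inK_sub_smul _ hc1K hc2K
  have hcf : c f ≠ 0 := by
    have h2f : c2 f = 0 := by rw [← Function.notMem_support, hc2s]; exact hfn
    have h1f : c1 f ≠ 0 := by rw [← Function.mem_support, hc1s]; exact hf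
    simpa [hc, h2f] using h1f
  have hce : c e = 0 := by simp [hc, div_mul_cancel₀ _ hc2e]
  have hsub : Function.support c ⊆ (C1 ∪ C2) \ {e} := by
    intro i hi
    refine ⟨?_, fun h => hi ?_⟩
    swap
    · rw [Set.mem_singleton_iff] at h; rw [h]; exact hce
    by_contra hiu
    rw [Set.mem_union, not_or, ← hc1s, ← hc2s] at hiu
    exact hi (by simp [hc, Function.notMem_support.mp hiu.1, Function.notMem_support.mp hiu.2])
  have hSsub : Function.support c ⊆ S :=
    hsub.trans (Set.diff_subset.trans (Set.union_subset h1.1.1 h2.1.1))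
  obtain ⟨C3, hC3, hfC3, hC3s⟩ :=
    exists_circuit_of_vec (Function.support c).ncard c le_rfl hcK hcf hSsub
  exact ⟨C3, hC3, hfC3, hC3s.trans hsub⟩

/-- Any two circuits with a common element and elements `f`, `g` respectively
give rise to a circuit containing both `f` and `g` (Oxley 4.1.2). -/
lemma circuit_trans :
    ∀ n : ℕ, ∀ C1 C2 : Set ι, ∀ e f g : ι, (C1 ∪ C2).ncard ≤ n →
      circuitOn w K S C1 → circuitOn w K S C2 → e ∈ C1 → e ∈ C2 → f ∈ C1 → g ∈ C2 →
      ∃ C, circuitOn w K S C ∧ f ∈ C ∧ g ∈ C := by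
  intro n
  induction n using Nat.strong_induction_on with
  | _ n ihn =>
  intro C1 C2 e f g hn h1 h2 he1 he2 hf hg
  by_cases hfC2 : f ∈ C2
  · exact ⟨C2, h2, hfC2, hg⟩
  by_cases hgC1 : g ∈ C1
  · exact ⟨C1, h1, hf, hgC1⟩
  obtain ⟨C3, hC3, hfC3, hC3sub⟩ := strong_elim h1 h2 he1 he2 hf hfC2
  obtain ⟨C3', hC3', hgC3', hC3'sub⟩ := strong_elim h2 h1 he2 he1 hg hgC1
  rw [Set.union_comm C2 C1] at hC3'sub
  have heu : e ∈ C1 ∪ C2 := Or.inl he1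
  have hfin : (C1 ∪ C2).Finite := Set.toFinite _
  by_cases hint : (C3 ∩ C3').Nonempty
  · obtain ⟨h, hh3, hh3'⟩ := hint
    have hsub : C3 ∪ C3' ⊆ (C1 ∪ C2) \ {e} := Set.union_subset hC3sub hC3'sub
    have hlt : (C3 ∪ C3').ncard < (C1 ∪ C2).ncard :=
      Set.ncard_lt_ncard (hsub.trans_ssubset (Set.sdiff_singleton_ssubset.mpr heu)) hfin
    exact ihn (C3 ∪ C3').ncard (by omega) C3 C3' h f g le_rfl hC3 hC3' hh3 hh3' hfC3 hgC3'
  · have hdisj : C3 ∩ C3' = ∅ := Set.not_nonempty_iff_eq_empty.mp hint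
    have hC3'C1 : (C3' ∩ C1).Nonempty := by
      by_contra hempty
      have h31 : C3' ⊆ C2 \ {e} := by
        intro x hx
        obtain ⟨hxu, hxe⟩ := hC3'sub hx
        rcases hxu with hx1 | hx2
        · exact absurd ⟨hx, hx1⟩ (fun h => hempty ⟨x, h⟩)
        · exact ⟨hx2, hxe⟩
      exact h2.2 C3' (h31.trans_ssubset (Set.sdiff_singleton_ssubset.mpr he2)) hC3'.1
    obtain ⟨h', hh'3', hh'1⟩ := hC3'C1
    have hsub13 : C1 ∪ C3' ⊆ C1 ∪ C2 :=
      Set.union_subset Set.subset_union_left (hC3'sub.trans (Set.diff_subset))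
    by_cases hsz : (C1 ∪ C3').ncard < (C1 ∪ C2).ncard
    · exact ihn (C1 ∪ C3').ncard (by omega) C1 C3' h' f g le_rfl h1 hC3' hh'1 hh'3' hf hgC3'
    · have heq : C1 ∪ C3' = C1 ∪ C2 := by
        rcases hsub13.ssubset_or_eq with hss | heq
        · exact absurd (Set.ncard_lt_ncard hss hfin) hsz
        · exact heq
      have hC2sub : C2 \ C1 ⊆ C3' := by
        intro x hx
        have : x ∈ C1 ∪ C3' := heq ▸ Or.inr hx.1
        rcases this with h | h
        · exact absurd h hx.2
        · exact h
      have hC3C1 : C3 ⊆ C1 \ {e} := by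
        intro x hx
        obtain ⟨hxu, hxe⟩ := hC3sub hx
        rcases hxu with hx1 | hx2
        · exact ⟨hx1, hxe⟩
        · by_cases hx1 : x ∈ C1
          · exact ⟨hx1, hxe⟩
          · exact absurd (Set.eq_empty_iff_forall_notMem.mp hdisj x
              ⟨hx, hC2sub ⟨hx2, hx1⟩⟩) not_false
      exact absurd hC3.1
        (h1.2 C3 (hC3C1.trans_ssubset (Set.sdiff_singleton_ssubset.mpr he1)))

/-- `relOn` is symmetric. -/
lemma relOn_symm {e f : ι} (h : relOn w K S e f) : relOn w K S f e := by
  rcases h with rfl | ⟨C, hC, he, hf⟩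
  · exact Or.inl rfl
  · exact Or.inr ⟨C, hC, hf, he⟩

/-- `relOn` is "transitive from a common point". -/
lemma relOn_trans {e f g : ι} (hef : relOn w K S e f) (heg : relOn w K S e g) :
    relOn w K S f g := by
  rcases hef with rfl | ⟨C1, hC1, he1, hf1⟩
  · exact heg
  rcases heg with rfl | ⟨C2, hC2, he2, hg2⟩
  · exact relOn_symm (Or.inr ⟨C1, hC1, he1, hf1⟩)
  obtain ⟨C, hC, hfC, hgC⟩ := circuit_trans (C1 ∪ C2).ncard C1 C2 e f g le_rfl
    hC1 hC2 he1 he2 hf1 hg2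
  exact Or.inr ⟨C, hC, hfC, hgC⟩

/-- If some element is related to everything in `S`, the matroid on `S` is connected. -/
lemma conn_of_component {e : ι} (h : ∀ f ∈ S, relOn w K S e f) : connOn w K S :=
  fun f hf g hg => relOn_trans (h f hf) (h g hg)

end Trans
section Main

variable {F : Type*} [Field F] {ι : Type*} [Fintype ι] {m : ℕ}
variable {w : ι → Fin m → F} {K : Submodule F (Fin m → F)} {S S' : Set ι}

lemma depOn_mono {D : Set ι} (h : S' ⊆ S) (hd : depOn w K S' D) : depOn w K S D :=
  ⟨hd.1.trans h, hd.2⟩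

lemma circuitOn_mono {C : Set ι} (h : S' ⊆ S) (hc : circuitOn w K S' C) :
    circuitOn w K S C :=
  ⟨depOn_mono h hc.1, fun D hD hdep => hc.2 D hD ⟨hD.subset.trans hc.1.1, hdep.2⟩⟩

lemma relOn_mono {e f : ι} (h : S' ⊆ S) (hr : relOn w K S' e f) : relOn w K S e f := by
  rcases hr with rfl | ⟨C, hC, he, hf⟩
  · exact Or.inl rfl
  · exact Or.inr ⟨C, circuitOn_mono h hC, he, hf⟩

/-- Restriction monotonicity for `CsdLE`. -/
lemma csdLE_mono {d : ℕ} (h : CsdLE w S K d) : ∀ S' ⊆ S, CsdLE w S' K d := by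
  induction h with
  | rank0 S K d h =>
    intro S' hS'
    exact .rank0 _ _ _ fun i hi => h i (hS' hi)
  | comp S K d hnc hcomp IH =>
    intro S' hS'
    by_cases hconn : connOn w K S'
    · rcases Set.eq_empty_or_nonempty S' with rfl | ⟨e, he⟩
      · exact .rank0 _ _ _ (by simp)
      · exact IH e (hS' he) S' fun f hf => ⟨hS' hf, relOn_mono hS' (hconn e he f hf)⟩
    · exact .comp _ _ _ hconn fun e he =>
        IH e (hS' he) _ fun f hf => ⟨hS' hf.1, relOn_mono hS' hf.2⟩
  | contr S K d v hconn hder IH =>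
    intro S' hS'
    suffices H : ∀ n : ℕ, ∀ T ⊆ S, T.ncard ≤ n → CsdLE w T K (d + 1) from
      H S'.ncard S' hS' le_rfl
    intro n
    induction n using Nat.strong_induction_on with
    | _ n ihn =>
    intro T hT hTn
    by_cases hc : connOn w K T
    · exact .contr _ _ _ v hc (IH T hT)
    · refine .comp _ _ _ hc fun e he => ?_
      set T' := {f ∈ T | relOn w K T e f} with hT'
      have hT'T : T' ⊆ T := fun f hf => hf.1
      have hne : T' ≠ T := by
        intro hEq
        exact hc (conn_of_component (e := e) fun f hf => by
          have : f ∈ T' := hEq ▸ hf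
          exact this.2)
      have hlt : T'.ncard < T.ncard :=
        Set.ncard_lt_ncard (hT'T.ssubset_of_ne hne) (Set.toFinite _)
      exact ihn T'.ncard (by omega) T' (hT'T.trans hT) le_rfl

/-- `CsdLE` always holds for a sufficiently large `d`. -/
lemma csdLE_total :
    ∀ a n : ℕ, ∀ (S : Set ι) (K : Submodule F (Fin m → F)),
      Module.finrank F (Fin m → F) - Module.finrank F K ≤ a → S.ncard ≤ n →
      CsdLE w S K (Module.finrank F (Fin m → F) - Module.finrank F K) := by
  intro a
  induction a using Nat.strong_induction_on with
  | _ a iha =>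
  intro n
  induction n using Nat.strong_induction_on with
  | _ n ihn =>
  intro S K hK hS
  by_cases hc : connOn w K S
  · by_cases hw : ∀ i ∈ S, w i ∈ K
    · exact .rank0 _ _ _ hw
    · push_neg at hw
      obtain ⟨i, hiS, hiK⟩ := hw
      set K' := K ⊔ Submodule.span F {w i} with hK'
      have hwne : w i ≠ 0 := fun h => hiK (h ▸ K.zero_mem)
      have hlt : K < K' := by
        refine lt_of_le_of_ne le_sup_left fun h => hiK ?_
        rw [h]
        exact Submodule.mem_sup_right (Submodule.mem_span_singleton_self (w i))
      have hr1 : Module.finrank F K < Module.finrank F K' :=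
        Submodule.finrank_lt_finrank_of_lt hlt
      have hr2 : Module.finrank F K' ≤ Module.finrank F K + 1 := by
        have := Submodule.finrank_add_le_finrank_add_finrank K (Submodule.span F {w i})
        rwa [finrank_span_singleton hwne] at this
      have hrK' : Module.finrank F K' = Module.finrank F K + 1 := by omega
      have hle : Module.finrank F K' ≤ Module.finrank F (Fin m → F) :=
        Submodule.finrank_le K'
      have harith : Module.finrank F (Fin m → F) - Module.finrank F K
          = (Module.finrank F (Fin m → F) - Module.finrank F K') + 1 := by omega
      rw [harith]
      refine .contr _ _ _ (w i) hc ?_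
      exact iha (Module.finrank F (Fin m → F) - Module.finrank F K') (by omega)
        S.ncard S K' le_rfl le_rfl
  · refine .comp _ _ _ hc fun e he => ?_
    set T' := {f ∈ S | relOn w K S e f} with hT'
    have hT'T : T' ⊆ S := fun f hf => hf.1
    have hne : T' ≠ S := by
      intro hEq
      exact hc (conn_of_component (e := e) fun f hf => by
        have : f ∈ T' := hEq ▸ hf
        exact this.2)
    have hlt : T'.ncard < S.ncard :=
      Set.ncard_lt_ncard (hT'T.ssubset_of_ne hne) (Set.toFinite _)
    exact ihn T'.ncard (by omega) T' K hK le_rfl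

end Main

/-!
STATEMENT 17: contraction*-depth is monotone under restriction: for a
represented matroid `M = M(A)` and any subset `X'` of its ground set,
`csd(M[X']) ≤ csd(M)`.
-/
theorem stmt17 {F : Type*} [Field F] {ι : Type*} [Fintype ι] {m : ℕ}
    (w : ι → Fin m → F) (X' : Set ι) :
    csdR w X' ⊥ ≤ csdR w Set.univ ⊥ := by
  have htotal : CsdLE w Set.univ ⊥
      (Module.finrank F (Fin m → F) - Module.finrank F (⊥ : Submodule F (Fin m → F))) :=
    csdLE_total _ (Set.univ : Set ι).ncard Set.univ ⊥ le_rfl le_rfl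
  have hne : {d | CsdLE w Set.univ ⊥ d}.Nonempty := ⟨_, htotal⟩
  have hmem : CsdLE w Set.univ ⊥ (sInf {d | CsdLE w Set.univ ⊥ d}) := Nat.sInf_mem hne
  exact Nat.sInf_le (csdLE_mono hmem X' (Set.subset_univ X'))
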